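/- arXiv:math/0203170 — 5 statements merged into one kernel-verified Lean document; each statement's English description precedes it below -/
import Mathlib

section
/- Let G be the graph product of a finite simple graph Γ = (V,E) with vertex groups (G_v)_{v∈V}. For every subset A ⊆ V, the canonical homomorphism from the graph product of the induced subgraph Γ_A with vertex groups (G_a)_{a∈A} to G is injective, and its image is the subgroup G(A) of G generated by the images of the G_a with a ∈ A. In other words, G(A) is itself a graph product of (Γ_A, G_a). -/
open Monoid

/-- The set of commutator relators defining a graph product. -/
def graphProdRels {V : Type*} (Γ : SimpleGraph V) (G : V → Type*) [∀ v, Group (G v)] :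
    Set (CoprodI G) :=
  {x | ∃ (u v : V) (_ : Γ.Adj u v) (g : G u) (h : G v),
    x = (CoprodI.of g)⁻¹ * (CoprodI.of h)⁻¹ * CoprodI.of g * CoprodI.of h}

/-- The graph product of the graph of groups `(Γ, G)`: the quotient of the free product of the
vertex groups by the normal closure of the commutators of elements of pairs of adjacent vertex
groups. -/
def GraphProduct {V : Type*} (Γ : SimpleGraph V) (G : V → Type*) [∀ v, Group (G v)] : Type _ :=
  CoprodI G ⧸ Subgroup.normalClosure (graphProdRels Γ G)

instance {V : Type*} (Γ : SimpleGraph V) (G : V → Type*) [∀ v, Group (G v)] :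
    Group (GraphProduct Γ G) :=
  QuotientGroup.Quotient.group _

/-- The canonical map from a vertex group into the graph product. -/
def GraphProduct.of {V : Type*} (Γ : SimpleGraph V) (G : V → Type*) [∀ v, Group (G v)] (v : V) :
    G v →* GraphProduct Γ G :=
  (QuotientGroup.mk' _).comp CoprodI.of

/-- `G(A)`: the subgroup of the graph product generated by the images of the vertex groups
`G_a`, `a ∈ A`. -/
def GraphProduct.vsub {V : Type*} (Γ : SimpleGraph V) (G : V → Type*) [∀ v, Group (G v)]
    (A : Set V) : Subgroup (GraphProduct Γ G) :=
  ⨆ a ∈ A, (GraphProduct.of Γ G a).range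

theorem GraphProduct.of_commute {V : Type*} (Γ : SimpleGraph V) (G : V → Type*)
    [∀ v, Group (G v)] {u v : V} (huv : Γ.Adj u v) (g : G u) (h : G v) :
    Commute (GraphProduct.of Γ G u g) (GraphProduct.of Γ G v h) := by
  have hmem : (CoprodI.of g)⁻¹ * (CoprodI.of h)⁻¹ * CoprodI.of g * CoprodI.of h ∈
      Subgroup.normalClosure (graphProdRels Γ G) :=
    Subgroup.subset_normalClosure ⟨u, v, huv, g, h, rfl⟩
  have h1 : ((GraphProduct.of Γ G u g)⁻¹ * (GraphProduct.of Γ G v h)⁻¹ *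
      GraphProduct.of Γ G u g * GraphProduct.of Γ G v h) = 1 := by
    have := (QuotientGroup.eq_one_iff
      ((CoprodI.of g)⁻¹ * (CoprodI.of h)⁻¹ * CoprodI.of g * CoprodI.of h)).2 hmem
    exact this
  show GraphProduct.of Γ G u g * GraphProduct.of Γ G v h =
    GraphProduct.of Γ G v h * GraphProduct.of Γ G u g
  calc GraphProduct.of Γ G u g * GraphProduct.of Γ G v h
      = GraphProduct.of Γ G v h * GraphProduct.of Γ G u g *
        ((GraphProduct.of Γ G u g)⁻¹ * (GraphProduct.of Γ G v h)⁻¹ *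
          GraphProduct.of Γ G u g * GraphProduct.of Γ G v h) := by group
    _ = GraphProduct.of Γ G v h * GraphProduct.of Γ G u g := by rw [h1, mul_one]

/-- The universal property of the graph product: a family of homomorphisms on the vertex groups
whose images commute along edges induces a homomorphism on the graph product. -/
def GraphProduct.lift {V : Type*} (Γ : SimpleGraph V) (G : V → Type*) [∀ v, Group (G v)]
    {H : Type*} [Group H] (f : ∀ v, G v →* H)
    (hf : ∀ u v, Γ.Adj u v → ∀ (g : G u) (h : G v), Commute (f u g) (f v h)) :
    GraphProduct Γ G →* H :=
  QuotientGroup.lift _ (CoprodI.lift f) (by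
    intro x hx
    refine Subgroup.normalClosure_le_normal ?_ hx
    rintro y ⟨u, v, huv, g, h, rfl⟩
    have hc := ((hf u v huv g h).inv_inv).commutator_eq
    simp only [commutatorElement_def, inv_inv] at hc
    simp only [SetLike.mem_coe, MonoidHom.mem_ker, map_mul, map_inv, CoprodI.lift_of]
    exact hc)

theorem GraphProduct.lift_of {V : Type*} (Γ : SimpleGraph V) (G : V → Type*) [∀ v, Group (G v)]
    {H : Type*} [Group H] (f : ∀ v, G v →* H)
    (hf : ∀ u v, Γ.Adj u v → ∀ (g : G u) (h : G v), Commute (f u g) (f v h))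
    (v : V) (g : G v) :
    GraphProduct.lift Γ G f hf (GraphProduct.of Γ G v g) = f v g := by
  show QuotientGroup.lift _ (CoprodI.lift f) _ (QuotientGroup.mk (CoprodI.of g)) = f v g
  rw [QuotientGroup.lift_mk]
  simp

/-- The canonical homomorphism from the graph product of the induced subgraph `Γ_A` with vertex
groups `(G_a)_{a ∈ A}` to the graph product of `(Γ, G)`. -/
def GraphProduct.inclusion {V : Type*} (Γ : SimpleGraph V) (G : V → Type*) [∀ v, Group (G v)]
    (A : Set V) : GraphProduct (Γ.induce A) (fun a : A => G a) →* GraphProduct Γ G :=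
  GraphProduct.lift (Γ.induce A) (fun a : A => G a) (fun a : A => GraphProduct.of Γ G a)
    (fun a b hab g h => GraphProduct.of_commute Γ G hab g h)

/-!
Killing the vertex groups outside `A` respects the commutation relations of `Γ`, so it defines a
retraction of the graph product of `Γ` onto that of `Γ_A`; being left inverse to the canonical
homomorphism, it makes the latter injective. Its image is generated by the images of the
generators `G_a`, `a ∈ A`, which is `G(A)`.
-/

namespace GraphProduct

variable {V : Type*} (Γ : SimpleGraph V) (G : V → Type*) [∀ v, Group (G v)]

theorem hom_ext {H : Type*} [Group H] {f g : GraphProduct Γ G →* H}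
    (h : ∀ v x, f (of Γ G v x) = g (of Γ G v x)) : f = g := by
  have hmk : f.comp (QuotientGroup.mk' _) = g.comp (QuotientGroup.mk' _) :=
    CoprodI.ext_hom _ _ fun v => MonoidHom.ext (h v)
  ext y
  obtain ⟨x, rfl⟩ := QuotientGroup.mk'_surjective _ y
  exact DFunLike.congr_fun hmk x

theorem iSup_range_of_eq_top : ⨆ v, (of Γ G v).range = ⊤ := by
  rw [eq_top_iff]
  rintro y -
  obtain ⟨x, rfl⟩ := QuotientGroup.mk'_surjective _ y
  induction x using CoprodI.induction_on with
  | one => exact Subgroup.one_mem _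
  | of v x => exact Subgroup.mem_iSup_of_mem v ⟨x, rfl⟩
  | mul x y hx hy =>
    rw [map_mul]
    exact Subgroup.mul_mem _ hx hy

theorem inclusion_of (A : Set V) (a : A) (x : G a) :
    inclusion Γ G A (of (Γ.induce A) (fun a : A => G a) a x) = of Γ G a x :=
  lift_of (Γ.induce A) (fun a : A => G a) _ _ a x

theorem inclusion_comp_of (A : Set V) (a : A) :
    (inclusion Γ G A).comp (of (Γ.induce A) (fun a : A => G a) a) = of Γ G a :=
  MonoidHom.ext (inclusion_of Γ G A a)

theorem range_inclusion (A : Set V) : (inclusion Γ G A).range = vsub Γ G A := by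
  rw [MonoidHom.range_eq_map, ← iSup_range_of_eq_top, Subgroup.map_iSup, vsub, iSup_subtype']
  refine iSup_congr fun a => ?_
  rw [← MonoidHom.range_comp, inclusion_comp_of]

def retraction (A : Set V) [DecidablePred (· ∈ A)] :
    GraphProduct Γ G →* GraphProduct (Γ.induce A) (fun a : A => G a) :=
  lift Γ G (fun v => if h : v ∈ A then of (Γ.induce A) (fun a : A => G a) ⟨v, h⟩ else 1)
    fun u v huv g h => by
      by_cases hu : u ∈ A
      · by_cases hv : v ∈ A
        · simp only [dif_pos hu, dif_pos hv]
          have hadj : (Γ.induce A).Adj ⟨u, hu⟩ ⟨v, hv⟩ := huv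
          exact of_commute (Γ.induce A) (fun a : A => G a) hadj g h
        · simp only [dif_neg hv, MonoidHom.one_apply, Commute.one_right]
      · simp only [dif_neg hu, MonoidHom.one_apply, Commute.one_left]

theorem retraction_comp_inclusion (A : Set V) [DecidablePred (· ∈ A)] :
    (retraction Γ G A).comp (inclusion Γ G A) = MonoidHom.id _ := by
  refine hom_ext _ _ fun a x => ?_
  simp only [MonoidHom.comp_apply, inclusion_of, retraction, lift_of, dif_pos a.2,
    MonoidHom.id_apply]

theorem inclusion_injective (A : Set V) : Function.Injective (inclusion Γ G A) := by
  classical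
  exact Function.LeftInverse.injective (g := retraction Γ G A)
    (DFunLike.congr_fun (retraction_comp_inclusion Γ G A))

end GraphProduct

theorem graphProduct_induced_subgraph_general {V : Type*} (Γ : SimpleGraph V)
    (G : V → Type*) [∀ v, Group (G v)] (A : Set V) :
    Function.Injective (GraphProduct.inclusion Γ G A) ∧
      (GraphProduct.inclusion Γ G A).range = GraphProduct.vsub Γ G A :=
  ⟨GraphProduct.inclusion_injective Γ G A, GraphProduct.range_inclusion Γ G A⟩

/-- For every `A ⊆ V`, the canonical homomorphism from the graph product of
`(Γ_A, G_a)` to the graph product `G` of `(Γ, G_v)` is injective, with image the subgroup `G(A)`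
generated by the images of the `G_a`, `a ∈ A`. -/
theorem graphProduct_induced_subgraph {V : Type*} [Fintype V] (Γ : SimpleGraph V)
    (G : V → Type*) [∀ v, Group (G v)] (A : Set V) :
    Function.Injective (GraphProduct.inclusion Γ G A) ∧
      (GraphProduct.inclusion Γ G A).range = GraphProduct.vsub Γ G A :=
  graphProduct_induced_subgraph_general Γ G A
end

section
/- Let G be the graph product of a finite simple graph Γ = (V,E) with vertex groups (G_v)_{v∈V}. For all subsets A, B ⊆ V, one has G(A) ∩ G(B) = G(A ∩ B) as subgroups of G. -/
open Monoid

namespace GraphProduct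

variable {V : Type*} (Γ : SimpleGraph V) (G : V → Type*) [∀ v, Group (G v)]

lemma of_comm {u v : V} (huv : Γ.Adj u v) (g : G u) (k : G v) :
    of Γ G u g * of Γ G v k = of Γ G v k * of Γ G u g := by
  have h1 : ((CoprodI.of g)⁻¹ * (CoprodI.of k)⁻¹ * CoprodI.of g * CoprodI.of k : CoprodI G)
      ∈ Subgroup.normalClosure (graphProdRels Γ G) :=
    Subgroup.subset_normalClosure ⟨u, v, huv, g, k, rfl⟩
  have h2 : ((QuotientGroup.mk' _ : CoprodI G →* GraphProduct Γ G))
      ((CoprodI.of g)⁻¹ * (CoprodI.of k)⁻¹ * CoprodI.of g * CoprodI.of k) = 1 := by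
    rw [QuotientGroup.mk'_apply, QuotientGroup.eq_one_iff]; exact h1
  simp only [map_mul, map_inv] at h2
  set a := of Γ G u g with ha
  set b := of Γ G v k with hb
  have h2' : a⁻¹ * b⁻¹ * a * b = 1 := h2
  calc a * b = (b * a) * (a⁻¹ * b⁻¹ * a * b) := by group
  _ = b * a := by rw [h2', mul_one]

open Classical in
/-- The retraction of the graph product onto `G(A)`. -/
noncomputable def retr (A : Set V) : GraphProduct Γ G →* GraphProduct Γ G :=
  QuotientGroup.lift _ (CoprodI.lift fun v => if v ∈ A then of Γ G v else 1) (by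
    intro x hx
    refine Subgroup.normalClosure_le_normal ?_ hx
    rintro _ ⟨u, v, huv, g, k, rfl⟩
    simp only [SetLike.mem_coe, MonoidHom.mem_ker, map_mul, map_inv, CoprodI.lift_of]
    by_cases hu : u ∈ A <;> by_cases hv : v ∈ A <;>
      simp only [hu, hv, if_true, if_false, MonoidHom.one_apply, inv_one, one_mul, mul_one,
        inv_mul_cancel, mul_inv_cancel]
    have hc := of_comm Γ G huv g k
    set a := of Γ G u g
    set b := of Γ G v k
    calc a⁻¹ * b⁻¹ * a * b = a⁻¹ * b⁻¹ * (a * b) := by group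
    _ = a⁻¹ * b⁻¹ * (b * a) := by rw [hc]
    _ = 1 := by group)

open Classical in
lemma retr_of (A : Set V) (v : V) (g : G v) :
    retr Γ G A (of Γ G v g) = if v ∈ A then of Γ G v g else 1 := by
  have h1 : retr Γ G A (of Γ G v g)
      = (CoprodI.lift fun v => if v ∈ A then of Γ G v else 1) (CoprodI.of g) := rfl
  rw [h1, CoprodI.lift_of]
  by_cases h : v ∈ A <;> simp [h]

lemma of_mem_vsub {A : Set V} {v : V} (hv : v ∈ A) (g : G v) :
    of Γ G v g ∈ vsub Γ G A :=
  le_iSup₂ (f := fun a (_ : a ∈ A) => (of Γ G a).range) v hv ⟨g, rfl⟩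

lemma retr_fix {A : Set V} {x : GraphProduct Γ G} (hx : x ∈ vsub Γ G A) :
    retr Γ G A x = x := by
  have h : vsub Γ G A ≤ MonoidHom.eqLocus (retr Γ G A) (MonoidHom.id _) := by
    refine iSup₂_le fun a ha => ?_
    rintro x ⟨g, rfl⟩
    show retr Γ G A (of Γ G a g) = of Γ G a g
    rw [retr_of, if_pos ha]
  exact h hx

lemma retr_mem {A B : Set V} {x : GraphProduct Γ G} (hx : x ∈ vsub Γ G B) :
    retr Γ G A x ∈ vsub Γ G (A ∩ B) := by
  have h : vsub Γ G B ≤ (vsub Γ G (A ∩ B)).comap (retr Γ G A) := by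
    refine iSup₂_le fun b hb => ?_
    rintro x ⟨g, rfl⟩
    show retr Γ G A (of Γ G b g) ∈ vsub Γ G (A ∩ B)
    rw [retr_of]
    by_cases hbA : b ∈ A
    · rw [if_pos hbA]; exact of_mem_vsub Γ G (Set.mem_inter hbA hb) g
    · rw [if_neg hbA]; exact one_mem _
  exact h hx

lemma vsub_mono {A B : Set V} (h : A ⊆ B) : vsub Γ G A ≤ vsub Γ G B :=
  biSup_mono h

end GraphProduct

/-- For all `A, B ⊆ V`, `G(A) ∩ G(B) = G(A ∩ B)`. -/
theorem graphProduct_vsub_inter {V : Type*} [Fintype V] (Γ : SimpleGraph V)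
    (G : V → Type*) [∀ v, Group (G v)] (A B : Set V) :
    GraphProduct.vsub Γ G A ⊓ GraphProduct.vsub Γ G B = GraphProduct.vsub Γ G (A ∩ B) := by
  refine le_antisymm ?_ (le_inf (GraphProduct.vsub_mono Γ G Set.inter_subset_left)
    (GraphProduct.vsub_mono Γ G Set.inter_subset_right))
  rintro x ⟨hxA, hxB⟩
  have h := GraphProduct.retr_mem Γ G (A := A) hxB
  rwa [GraphProduct.retr_fix Γ G hxA] at h
end

section
/- Let G be the graph product of a finite simple graph Γ = (V,E) with nontrivial vertex groups (G_v)_{v∈V}, and let A, B ⊆ V each span a complete subgraph of Γ. If G(A) is conjugate in G to G(B) (i.e., G(A) = gG(B)g⁻¹ for some g ∈ G), then A = B. -/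
open Monoid

section Aux

variable {V : Type*} (Γ : SimpleGraph V) (G : V → Type*) [∀ v, Group (G v)]

open Classical in
/-- Map `G u →* G v`: identity if `u = v`, trivial otherwise. -/
noncomputable def vHom (v u : V) : G u →* G v :=
  if h : u = v then h ▸ MonoidHom.id (G u) else 1

lemma vHom_self (v : V) : vHom G v v = MonoidHom.id (G v) := by
  simp [vHom]

lemma vHom_ne {v u : V} (h : u ≠ v) : vHom G v u = 1 := by
  simp [vHom, h]

/-- The retraction on the free product. -/
noncomputable def projCoprod (v : V) : Monoid.CoprodI G →* G v :=
  Monoid.CoprodI.lift (vHom G v)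

lemma projCoprod_rels (v : V) :
    graphProdRels Γ G ⊆ (projCoprod G v).ker := by
  rintro x ⟨u, w, hadj, g, h, rfl⟩
  have hne : u ≠ w := hadj.ne
  simp only [MonoidHom.mem_ker, map_mul, map_inv, projCoprod, Monoid.CoprodI.lift_of]
  by_cases hu : u = v
  · have hw : w ≠ v := by rintro rfl; exact hne hu
    simp [vHom_ne G hw]
  · simp [vHom_ne G hu]

/-- The retraction on the graph product. -/
noncomputable def projGP (v : V) : GraphProduct Γ G →* G v :=
  QuotientGroup.lift _ (projCoprod G v)
    (Subgroup.normalClosure_le_normal (projCoprod_rels Γ G v))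

lemma projGP_of (v u : V) (g : G u) :
    projGP Γ G v (GraphProduct.of Γ G u g) = vHom G v u g := by
  change projCoprod G v (Monoid.CoprodI.of g) = _
  simp [projCoprod]

lemma projGP_comp_of (v u : V) :
    (projGP Γ G v).comp (GraphProduct.of Γ G u) = vHom G v u := by
  ext g; exact projGP_of Γ G v u g

open Classical in
lemma map_vsub (v : V) (A : Set V) :
    (GraphProduct.vsub Γ G A).map (projGP Γ G v)
      = if v ∈ A then (⊤ : Subgroup (G v)) else ⊥ := by
  rw [GraphProduct.vsub]
  rw [Subgroup.map_iSup]
  have : ∀ a : V, ((⨆ _ : a ∈ A, (GraphProduct.of Γ G a).range).map (projGP Γ G v))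
      = ⨆ _ : a ∈ A, ((GraphProduct.of Γ G a).range.map (projGP Γ G v)) := by
    intro a; rw [Subgroup.map_iSup]
  simp only [this]
  have hr : ∀ a : V, (GraphProduct.of Γ G a).range.map (projGP Γ G v)
      = (vHom G v a : G a →* G v).range := by
    intro a
    rw [← MonoidHom.range_comp, projGP_comp_of]
  simp only [hr]
  by_cases hv : v ∈ A
  · rw [if_pos hv]
    apply top_unique
    have h1 : ((vHom G v v : G v →* G v).range : Subgroup (G v)) = ⊤ := by
      rw [vHom_self]
      exact MonoidHom.range_eq_top_of_surjective _ (fun x => ⟨x, rfl⟩)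
    rw [← h1]
    exact le_iSup₂ (f := fun a (_ : a ∈ A) => (vHom G v a : G a →* G v).range) v hv
  · rw [if_neg hv]
    apply le_bot_iff.mp
    refine iSup_le fun a => iSup_le fun ha => ?_
    have : a ≠ v := by rintro rfl; exact hv ha
    rw [vHom_ne G this]
    rintro x ⟨y, rfl⟩
    simp [Subgroup.mem_bot]

end Aux

/-- If the vertex groups are nontrivial, `A, B ⊆ V` each span a complete
subgraph, and `G(A)` is conjugate to `G(B)`, then `A = B`. -/
theorem graphProduct_conj_complete_subgroups_eq {V : Type*} [Fintype V] (Γ : SimpleGraph V)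
    (G : V → Type*) [∀ v, Group (G v)] [∀ v, Nontrivial (G v)] (A B : Set V)
    (hA : A.Pairwise Γ.Adj) (hB : B.Pairwise Γ.Adj)
    (hconj : ∃ g : GraphProduct Γ G,
      GraphProduct.vsub Γ G A = (GraphProduct.vsub Γ G B).map (MulAut.conj g).toMonoidHom) :
    A = B := by
  classical
  obtain ⟨g, hg⟩ := hconj
  ext v
  have key := congrArg (Subgroup.map (projGP Γ G v)) hg
  rw [map_vsub, Subgroup.map_map] at key
  have hc : (projGP Γ G v).comp (MulAut.conj g).toMonoidHom
      = (MulAut.conj (projGP Γ G v g)).toMonoidHom.comp (projGP Γ G v) := by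
    ext x
    simp [map_mul, map_inv]
  rw [hc, ← Subgroup.map_map, map_vsub] at key
  have htop : (⊤ : Subgroup (G v)).map (MulAut.conj (projGP Γ G v g)).toMonoidHom = ⊤ :=
    Subgroup.map_top_of_surjective _ (MulAut.conj (projGP Γ G v g)).surjective
  have hne : (⊥ : Subgroup (G v)) ≠ ⊤ := by
    obtain ⟨x, hx⟩ := exists_ne (1 : G v)
    intro h
    exact hx (Subgroup.mem_bot.mp (h ▸ Subgroup.mem_top x))
  by_cases hvA : v ∈ A <;> by_cases hvB : v ∈ B <;>
    simp only [hvA, hvB, if_pos, if_neg, Subgroup.map_bot, htop, not_false_iff] at key ⊢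
  · exact (hne key.symm).elim
  · exact (hne key).elim
end

section
/- A finite simple graph Γ = (V,E) is T₀ (no edge of Γ is a module) if and only if for every pair of distinct vertices u, v ∈ V there exists a clique of Γ containing exactly one of u and v. -/
/-- A clique of a graph: a maximal set of pairwise adjacent vertices. -/
def IsMaxClique {V : Type*} (Γ : SimpleGraph V) (C : Set V) : Prop :=
  Γ.IsClique C ∧ ∀ D : Set V, Γ.IsClique D → C ⊆ D → C = D

/-! A vertex outside a clique `C` containing an endpoint `u` of an edge `uv` is adjacent to `u`
but, by maximality of `C`, some vertex `w ∈ C` misses `v`: this `w` splits the edge.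
Conversely, a vertex `w` splitting the edge, say adjacent to `u` but not to `v`, lies with `u` in
a clique that cannot contain `v`; and non-adjacent `u`, `v` are separated by any clique through
`u`. -/

namespace IsMaxClique

variable {V : Type*} {Γ : SimpleGraph V} {C : Set V}

theorem iff_maximal : IsMaxClique Γ C ↔ Maximal Γ.IsClique C :=
  ⟨fun h => ⟨h.1, fun D hD hCD => (h.2 D hD hCD).symm.subset⟩,
    fun h => ⟨h.1, fun _ hD hCD => h.eq_of_subset hD hCD⟩⟩

theorem exists_not_adj_of_notMem (hC : IsMaxClique Γ C) {v : V} (hv : v ∉ C) :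
    ∃ w ∈ C, ¬Γ.Adj v w := by
  by_contra! h
  exact hv <| (iff_maximal.mp hC).mem_of_prop_insert <| hC.1.insert fun w hw _ => h w hw

theorem exists_adj_not_adj_of_adj (hC : IsMaxClique Γ C) {u v : V} (hu : u ∈ C) (hv : v ∉ C)
    (huv : Γ.Adj u v) : ∃ w : V, w ≠ u ∧ w ≠ v ∧ Γ.Adj w u ∧ ¬Γ.Adj w v := by
  obtain ⟨w, hw, hvw⟩ := hC.exists_not_adj_of_notMem hv
  have hwu : w ≠ u := by rintro rfl; exact hvw huv.symm
  exact ⟨w, hwu, ne_of_mem_of_not_mem hw hv, hC.1 hw hu hwu, fun h => hvw h.symm⟩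

end IsMaxClique

theorem SimpleGraph.IsClique.exists_isMaxClique_superset {V : Type*} [Finite V]
    {Γ : SimpleGraph V} {s : Set V} (hs : Γ.IsClique s) :
    ∃ C : Set V, IsMaxClique Γ C ∧ s ⊆ C := by
  obtain ⟨C, hsC, hC⟩ := Finite.exists_le_maximal hs
  exact ⟨C, IsMaxClique.iff_maximal.mpr hC, hsC⟩

theorem exists_isMaxClique_mem_notMem {V : Type*} [Finite V] {Γ : SimpleGraph V} {u v w : V}
    (hw : w = u ∨ Γ.Adj w u) (hwv : w ≠ v) (hnadj : ¬Γ.Adj w v) :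
    ∃ C : Set V, IsMaxClique Γ C ∧ u ∈ C ∧ v ∉ C := by
  have hclique : Γ.IsClique {w, u} := SimpleGraph.isClique_pair.mpr fun hne => hw.resolve_left hne
  obtain ⟨C, hC, hsub⟩ := hclique.exists_isMaxClique_superset
  refine ⟨C, hC, hsub (by simp), fun hv => hnadj (hC.1 (hsub (by simp)) hv hwv)⟩

/-- A finite simple graph is `T₀` (no edge is a module, i.e. every edge has a
third vertex adjacent to exactly one of its endpoints) if and only if any two distinct vertices
are separated by a clique: there is a clique containing exactly one of them. -/
theorem t0_iff_cliques_separate {V : Type*} [Fintype V] (Γ : SimpleGraph V) :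
    (∀ u v : V, Γ.Adj u v →
      ∃ w : V, w ≠ u ∧ w ≠ v ∧ Xor' (Γ.Adj w u) (Γ.Adj w v)) ↔
    (∀ u v : V, u ≠ v → ∃ C : Set V, IsMaxClique Γ C ∧ Xor' (u ∈ C) (v ∈ C)) := by
  constructor
  · intro hT0 u v huv
    by_cases hadj : Γ.Adj u v
    · obtain ⟨w, hwu, hwv, hu_only | hv_only⟩ := hT0 u v hadj
      · obtain ⟨C, hC, hu, hv⟩ := exists_isMaxClique_mem_notMem (.inr hu_only.1) hwv hu_only.2
        exact ⟨C, hC, .inl ⟨hu, hv⟩⟩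
      · obtain ⟨C, hC, hv, hu⟩ := exists_isMaxClique_mem_notMem (.inr hv_only.1) hwu hv_only.2
        exact ⟨C, hC, .inr ⟨hv, hu⟩⟩
    · obtain ⟨C, hC, hu, hv⟩ := exists_isMaxClique_mem_notMem (.inl rfl) huv hadj
      exact ⟨C, hC, .inl ⟨hu, hv⟩⟩
  · intro hsep u v hadj
    obtain ⟨C, hC, ⟨hu, hv⟩ | ⟨hv, hu⟩⟩ := hsep u v hadj.ne
    · obtain ⟨w, hwu, hwv, hwu', hwv'⟩ := hC.exists_adj_not_adj_of_adj hu hv hadj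
      exact ⟨w, hwu, hwv, .inl ⟨hwu', hwv'⟩⟩
    · obtain ⟨w, hwv, hwu, hwv', hwu'⟩ := hC.exists_adj_not_adj_of_adj hv hu hadj.symm
      exact ⟨w, hwu, hwv, .inr ⟨hwv', hwu'⟩⟩
end

section
/- A finite simple graph Γ = (V,E) is T₁ (for every edge {u,v} ∈ E there exists w ∈ V−{u,v} with {u,w} ∈ E and {v,w} ∉ E) if and only if every vertex v ∈ V satisfies {v} = ⋂ {C : C is a clique of Γ with v ∈ C}. -/
namespace SimpleGraph

variable {V : Type*} (Γ : SimpleGraph V)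

def closedNeighborSet (v : V) : Set V := insert v (Γ.neighborSet v)

variable {Γ}

theorem mem_closedNeighborSet {v w : V} : w ∈ Γ.closedNeighborSet v ↔ w = v ∨ Γ.Adj v w :=
  Iff.rfl

theorem isMaxClique_iff_maximal {C : Set V} : IsMaxClique Γ C ↔ Maximal Γ.IsClique C :=
  and_congr_right fun _ ↦ forall₂_congr fun _ _ ↦
    ⟨fun h hCD ↦ (h hCD).symm.subset, fun h hCD ↦ hCD.antisymm (h hCD)⟩

theorem exists_isMaxClique_superset [Finite V] {S : Set V} (hS : Γ.IsClique S) :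
    ∃ C, IsMaxClique Γ C ∧ S ⊆ C := by
  obtain ⟨C, hSC, hC⟩ := Finite.exists_le_maximal hS
  exact ⟨C, isMaxClique_iff_maximal.2 hC, hSC⟩

theorem _root_.IsMaxClique.mem_of_closedNeighborSet_subset {C : Set V} {v x : V}
    (hC : IsMaxClique Γ C) (hv : v ∈ C) (hvx : Γ.closedNeighborSet v ⊆ Γ.closedNeighborSet x) :
    x ∈ C := by
  have hxC : Γ.IsClique (insert x C) := hC.1.insert fun c hc hxc ↦ by
    have hcv : c ∈ Γ.closedNeighborSet v := by
      by_cases hcv : c = v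
      · exact Or.inl hcv
      · exact Or.inr (hC.1 hv hc (Ne.symm hcv))
    exact (mem_closedNeighborSet.1 (hvx hcv)).resolve_left (Ne.symm hxc)
  exact (hC.2 _ hxC (Set.subset_insert x C)) ▸ Set.mem_insert x C

theorem closedNeighborSet_subset_of_forall_isMaxClique [Finite V] {v x : V}
    (h : ∀ C, IsMaxClique Γ C → v ∈ C → x ∈ C) :
    Γ.closedNeighborSet v ⊆ Γ.closedNeighborSet x := by
  intro w hw
  by_cases hwx : w = x
  · exact Or.inl hwx
  have hvw : Γ.IsClique {v, w} := isClique_pair.2 fun hne ↦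
    (mem_closedNeighborSet.1 hw).resolve_left (Ne.symm hne)
  obtain ⟨C, hC, hvwC⟩ := exists_isMaxClique_superset hvw
  exact Or.inr (hC.1 (h C hC (hvwC (Set.mem_insert v _))) (hvwC (Set.mem_insert_of_mem v rfl))
    (Ne.symm hwx))

theorem mem_iInter_isMaxClique_iff [Finite V] {v x : V} :
    x ∈ ⋂ C ∈ {C : Set V | IsMaxClique Γ C ∧ v ∈ C}, C ↔
      Γ.closedNeighborSet v ⊆ Γ.closedNeighborSet x := by
  simp only [Set.mem_iInter, Set.mem_ofPred_eq, and_imp]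
  exact ⟨closedNeighborSet_subset_of_forall_isMaxClique,
    fun hvx _ hC hv ↦ hC.mem_of_closedNeighborSet_subset hv hvx⟩

theorem exists_adj_not_adj_iff_not_closedNeighborSet_subset {u v : V} (huv : Γ.Adj u v) :
    (∃ w, w ≠ u ∧ w ≠ v ∧ Γ.Adj u w ∧ ¬ Γ.Adj v w) ↔
      ¬ Γ.closedNeighborSet u ⊆ Γ.closedNeighborSet v := by
  simp only [Set.not_subset, mem_closedNeighborSet, not_or]
  constructor
  · rintro ⟨w, -, hwv, huw, hvw⟩
    exact ⟨w, Or.inr huw, hwv, hvw⟩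
  · rintro ⟨w, rfl | huw, hwv, hvw⟩
    · exact absurd huv.symm hvw
    · exact ⟨w, huw.ne.symm, hwv, huw, hvw⟩

theorem forall_closedNeighborSet_subset_imp_eq_iff {v : V} :
    (∀ x, Γ.closedNeighborSet v ⊆ Γ.closedNeighborSet x → x = v) ↔
      ∀ x, Γ.Adj v x → ¬ Γ.closedNeighborSet v ⊆ Γ.closedNeighborSet x := by
  refine ⟨fun h x hvx hsub ↦ hvx.ne (h x hsub).symm, fun h x hsub ↦ ?_⟩
  by_contra hxv
  have hxv' : Γ.Adj x v :=
    (mem_closedNeighborSet.1 (hsub (Set.mem_insert v _))).resolve_left (Ne.symm hxv)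
  exact h x hxv'.symm hsub

end SimpleGraph

open SimpleGraph in
/-- A finite simple graph is `T₁` (for every edge `{u,v}` there is a third
vertex adjacent to `u` but not to `v`) if and only if every vertex is the intersection of the
cliques containing it. -/
theorem t1_iff_vertices_are_intersections_of_cliques {V : Type*} [Fintype V]
    (Γ : SimpleGraph V) :
    (∀ u v : V, Γ.Adj u v → ∃ w : V, w ≠ u ∧ w ≠ v ∧ Γ.Adj u w ∧ ¬ Γ.Adj v w) ↔
    (∀ v : V, ({v} : Set V) = ⋂ C ∈ {C : Set V | IsMaxClique Γ C ∧ v ∈ C}, C) := by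
  have hsingleton (v : V) : ({v} : Set V) = ⋂ C ∈ {C : Set V | IsMaxClique Γ C ∧ v ∈ C}, C ↔
      ∀ x, Γ.closedNeighborSet v ⊆ Γ.closedNeighborSet x → x = v := by
    simp only [eq_comm (a := ({v} : Set V)), Set.eq_singleton_iff_unique_mem,
      mem_iInter_isMaxClique_iff, subset_rfl, true_and]
  simp only [hsingleton, forall_closedNeighborSet_subset_imp_eq_iff]
  exact forall₃_congr fun _ _ huv ↦ exists_adj_not_adj_iff_not_closedNeighborSet_subset huv
end
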